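/- arXiv:1303.4335 — 4 statements merged into one kernel-verified Lean document; each statement's English description precedes it below -/
import Mathlib

section
/- Let 𝒪 be a discrete valuation ring whose maximal ideal is generated by a prime number p, let 𝔽 := 𝒪/p𝒪 be its residue field, let m ≥ 1, and let M', M, M'' be finitely generated 𝒪-modules killed by p^m. If there is an exact sequence of 𝒪-modules 0 → M' → M → M'' (exact at M' and at M), then r_{𝔭,m}(M) ≤ r_{𝔭,m}(M') + dim_𝔽(M'' ⊗_𝒪 𝔽), where r_{𝔭,m}(M) := dim_𝔽(p^{m−1}M). -/
/-!
Write `d(X) = dim_𝔽 (𝔽 ⊗ X)`, the minimal number of generators of `X`, and `c = p^{m-1}`.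
Multiplication by `c` maps `M` onto `cM` and `f(M')` onto `f(cM')`, so `cM ⧸ f(cM')` is a
quotient of `M ⧸ f(M') ≅ g(M)`. Right exactness of `𝔽 ⊗ -` then gives
`d(cM) ≤ d(cM') + d(g(M))`, and over a principal ideal domain a submodule needs no more
generators than the ambient module, so `d(g(M)) ≤ d(M'')`.
-/

open TensorProduct

/-- `rDim O p m M` is `r_{𝔭,m}(M) := dim_𝔽 (p^{m-1}·M)`, where `𝔽 = 𝒪/p𝒪`;
for `M` killed by `p^m`, the submodule `p^{m-1}·M` is killed by `p`, so its
`𝔽`-vector space structure is canonically realized by base change `𝔽 ⊗[𝒪] (p^{m-1}·M)`. -/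
noncomputable def rDim (O : Type*) [CommRing O] (p m : ℕ)
    (M : Type*) [AddCommGroup M] [Module O M] : ℕ :=
  Module.finrank (O ⧸ Ideal.span {(p : O)})
    ((O ⧸ Ideal.span {(p : O)}) ⊗[O]
      ↥(Ideal.span {(p : O) ^ (m - 1)} • (⊤ : Submodule O M)))

namespace Module

variable {R K : Type*} [CommRing R]

theorem finrank_baseChange_le_of_surjective [CommRing K] [StrongRankCondition K] [Algebra R K]
    {X Y : Type*} [AddCommGroup X] [Module R X] [Module.Finite R X] [AddCommGroup Y] [Module R Y]
    {σ : X →ₗ[R] Y} (hσ : Function.Surjective σ) :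
    finrank K (K ⊗[R] Y) ≤ finrank K (K ⊗[R] X) :=
  LinearMap.finrank_le_finrank_of_surjective (f := σ.baseChange K) <| by
    rw [LinearMap.baseChange_eq_ltensor]
    exact LinearMap.lTensor_surjective K hσ

theorem finrank_baseChange_le_add_of_exact [Field K] [Algebra R K]
    {X Y Z : Type*} [AddCommGroup X] [Module R X] [Module.Finite R X]
    [AddCommGroup Y] [Module R Y] [Module.Finite R Y] [AddCommGroup Z] [Module R Z]
    {f : X →ₗ[R] Y} {g : Y →ₗ[R] Z} (hfg : Function.Exact f g) (hg : Function.Surjective g) :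
    finrank K (K ⊗[R] Y) ≤ finrank K (K ⊗[R] X) + finrank K (K ⊗[R] Z) := by
  have hexact : Function.Exact (f.baseChange K) (g.baseChange K) := by
    simpa only [LinearMap.baseChange_eq_ltensor] using lTensor_exact K hfg hg
  have hsurj : LinearMap.range (g.baseChange K) = ⊤ := by
    rw [LinearMap.range_eq_top, LinearMap.baseChange_eq_ltensor]
    exact LinearMap.lTensor_surjective K hg
  rw [← (g.baseChange K).finrank_range_add_finrank_ker, hsurj, finrank_top,
    hexact.linearMap_ker_eq, add_comm]
  gcongr
  exact LinearMap.finrank_range_le _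

end Module

namespace Submodule

section CommRing

variable {R M : Type*} [CommRing R] [AddCommGroup M] [Module R M]

theorem mem_span_singleton_smul_top_iff {c : R} {x : M} :
    x ∈ Ideal.span {c} • (⊤ : Submodule R M) ↔ ∃ y, c • y = x := by
  rw [ideal_span_singleton_smul, mem_smul_pointwise_iff_exists]
  simp

variable (M) in
def smulTop (c : R) : M →ₗ[R] ↥(Ideal.span {c} • (⊤ : Submodule R M)) :=
  (LinearMap.lsmul R M c).codRestrict _ fun y => mem_span_singleton_smul_top_iff.2 ⟨y, rfl⟩

@[simp]
theorem coe_smulTop_apply (c : R) (x : M) : (smulTop M c x : M) = c • x := rfl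

theorem smulTop_surjective (c : R) : Function.Surjective (smulTop M c) := by
  rintro ⟨x, hx⟩
  obtain ⟨y, rfl⟩ := mem_span_singleton_smul_top_iff.1 hx
  exact ⟨y, rfl⟩

end CommRing

theorem spanFinrank_le_of_le {R M : Type*} [CommRing R] [IsDomain R] [IsPrincipalIdealRing R]
    [AddCommGroup M] [Module R M] {N P : Submodule R M} (hNP : N ≤ P) (hP : P.FG) :
    N.spanFinrank ≤ P.spanFinrank := by
  obtain ⟨s, hs, hsP⟩ := hP.exists_span_finset_card_eq_spanFinrank
  let π := Finsupp.linearCombination R ((↑) : s → M)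
  have hπ : LinearMap.range π = P := by
    rw [Finsupp.range_linearCombination, Subtype.range_coe_subtype, Finset.setOfPred_mem, hsP]
  have hN : (N.comap π).map π = N := by
    rw [map_comap_eq, hπ, inf_eq_right.2 hNP]
  have : Module.Free R (N.comap π) := .of_basis (basisOfPid Finsupp.basisSingleOne _).2
  calc N.spanFinrank = ((N.comap π).map π).spanFinrank := by rw [hN]
    _ ≤ (N.comap π).spanFinrank := spanFinrank_map_le_of_fg π (IsNoetherian.noetherian _)
    _ = Module.finrank R (N.comap π) := by
      rw [Module.finrank_eq_spanFinrank_of_free, spanFinrank_top]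
    _ ≤ Module.finrank R (s →₀ R) := finrank_le _
    _ = P.spanFinrank := by simp [hs]

end Submodule

open Module Submodule in
theorem finrank_baseChange_span_singleton_smul_top_le {R K : Type*} [CommRing R] [Field K]
    [Algebra R K] (c : R)
    {M' M M'' : Type*} [AddCommGroup M'] [Module R M'] [Module.Finite R M']
    [AddCommGroup M] [Module R M] [Module.Finite R M] [AddCommGroup M''] [Module R M'']
    {f : M' →ₗ[R] M} {g : M →ₗ[R] M''} (hfg : LinearMap.range f = LinearMap.ker g) :
    finrank K (K ⊗[R] ↥(Ideal.span {c} • (⊤ : Submodule R M))) ≤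
      finrank K (K ⊗[R] ↥(Ideal.span {c} • (⊤ : Submodule R M'))) +
        finrank K (K ⊗[R] LinearMap.range g) := by
  have : Module.Finite R ↥(Ideal.span {c} • (⊤ : Submodule R M)) :=
    .of_surjective _ (smulTop_surjective c)
  have : Module.Finite R ↥(Ideal.span {c} • (⊤ : Submodule R M')) :=
    .of_surjective _ (smulTop_surjective c)
  let fc := f.restrict (p := Ideal.span {c} • ⊤) (q := Ideal.span {c} • ⊤) fun x hx => by
    obtain ⟨y, rfl⟩ := mem_span_singleton_smul_top_iff.1 hx
    exact mem_span_singleton_smul_top_iff.2 ⟨f y, (map_smul f c y).symm⟩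
  have hcomm : smulTop M c ∘ₗ f = fc ∘ₗ smulTop M' c := by
    ext x
    simp [fc]
  let ψ := (LinearMap.range f).mapQ (LinearMap.range fc) (smulTop M c) <| by
    rintro _ ⟨y, rfl⟩
    exact ⟨smulTop M' c y, congr($hcomm.symm y)⟩
  have hψ : Function.Surjective ψ := by
    refine Function.Surjective.of_comp (g := (LinearMap.range f).mkQ) ?_
    rw [← LinearMap.coe_comp, mapQ_mkQ]
    exact (mkQ_surjective _).comp (smulTop_surjective c)
  have hexact : Function.Exact f g.rangeRestrict :=
    LinearMap.exact_iff.2 (by rw [LinearMap.ker_rangeRestrict, hfg])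
  let e := (hexact.linearEquivOfSurjective g.surjective_rangeRestrict).symm
  have hquot : finrank K (K ⊗[R] (_ ⧸ LinearMap.range fc)) ≤
      finrank K (K ⊗[R] LinearMap.range g) :=
    finrank_baseChange_le_of_surjective (σ := ψ ∘ₗ e.toLinearMap) (hψ.comp e.surjective)
  grw [finrank_baseChange_le_add_of_exact (K := K) (LinearMap.exact_map_mkQ_range fc)
    (mkQ_surjective _), hquot]

namespace IsLocalRing

open Module Submodule

variable {R : Type*} [CommRing R] [IsLocalRing R]

theorem finrank_quotient_baseChange_eq_of_eq_maximalIdeal {I : Ideal R} (hI : I = maximalIdeal R)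
    (X : Type*) [AddCommGroup X] [Module R X] :
    finrank (R ⧸ I) ((R ⧸ I) ⊗[R] X) = finrank (ResidueField R) (ResidueField R ⊗[R] X) := by
  subst hI
  rfl

theorem finrank_residueField_baseChange_eq_spanFinrank {M : Type*} [AddCommGroup M] [Module R M]
    (N : Submodule R M) (hN : N.FG) :
    finrank (ResidueField R) (ResidueField R ⊗[R] N) = N.spanFinrank := by
  rw [finrank_eq_spanFinrank_of_free, TensorProduct.spanFinrank_top_eq_of_residueField N hN]

theorem finrank_residueField_baseChange_submodule_le [IsDomain R] [IsPrincipalIdealRing R]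
    {M : Type*} [AddCommGroup M] [Module R M] [Module.Finite R M] (N : Submodule R M) :
    finrank (ResidueField R) (ResidueField R ⊗[R] N) ≤
      finrank (ResidueField R) (ResidueField R ⊗[R] M) := by
  rw [← (topEquiv (R := R) (M := M)).baseChange R (ResidueField R) _ _ |>.finrank_eq,
    finrank_residueField_baseChange_eq_spanFinrank _ (IsNoetherian.noetherian N),
    finrank_residueField_baseChange_eq_spanFinrank _ Module.Finite.fg_top]
  exact spanFinrank_le_of_le le_top Module.Finite.fg_top

end IsLocalRing

theorem stmt3_general (O : Type*) [CommRing O] [IsDomain O] [IsDiscreteValuationRing O]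
    (p : ℕ)
    (hmax : IsLocalRing.maximalIdeal O = Ideal.span {(p : O)})
    (m : ℕ)
    (M' : Type*) [AddCommGroup M'] [Module O M'] [Module.Finite O M']
    (M : Type*) [AddCommGroup M] [Module O M] [Module.Finite O M]
    (M'' : Type*) [AddCommGroup M''] [Module O M''] [Module.Finite O M'']
    (f : M' →ₗ[O] M) (g : M →ₗ[O] M'')
    (hfg : LinearMap.range f = LinearMap.ker g) :
    rDim O p m M ≤ rDim O p m M' +
      Module.finrank (O ⧸ Ideal.span {(p : O)})
        ((O ⧸ Ideal.span {(p : O)}) ⊗[O] M'') := by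
  unfold rDim
  simp only [IsLocalRing.finrank_quotient_baseChange_eq_of_eq_maximalIdeal hmax.symm]
  calc _ ≤ _ := finrank_baseChange_span_singleton_smul_top_le _ hfg
    _ ≤ _ := by
      gcongr
      exact IsLocalRing.finrank_residueField_baseChange_submodule_le _

/-- Given an exact sequence `0 → M' → M → M''` of finitely generated
`𝒪`-modules killed by `p^m` (exact at `M'` and at `M`), one has
`r_{𝔭,m}(M) ≤ r_{𝔭,m}(M') + dim_𝔽 (M'' ⊗_𝒪 𝔽)`. -/
theorem stmt3 (O : Type*) [CommRing O] [IsDomain O] [IsDiscreteValuationRing O]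
    (p : ℕ) (hp : p.Prime)
    (hmax : IsLocalRing.maximalIdeal O = Ideal.span {(p : O)})
    (m : ℕ) (hm : 1 ≤ m)
    (M' : Type*) [AddCommGroup M'] [Module O M'] [Module.Finite O M']
    (M : Type*) [AddCommGroup M] [Module O M] [Module.Finite O M]
    (M'' : Type*) [AddCommGroup M''] [Module O M''] [Module.Finite O M'']
    (hM' : ∀ x : M', ((p : O) ^ m) • x = 0)
    (hM : ∀ x : M, ((p : O) ^ m) • x = 0)
    (hM'' : ∀ x : M'', ((p : O) ^ m) • x = 0)
    (f : M' →ₗ[O] M) (g : M →ₗ[O] M'')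
    (hf : Function.Injective f)
    (hfg : LinearMap.range f = LinearMap.ker g) :
    rDim O p m M ≤ rDim O p m M' +
      Module.finrank (O ⧸ Ideal.span {(p : O)})
        ((O ⧸ Ideal.span {(p : O)}) ⊗[O] M'') :=
  stmt3_general O p hmax m M' M M'' f g hfg
end

section
/- Let p and ℓ be prime numbers and let m ≥ 1 be an integer with p^m dividing ℓ+1. Let G be a cyclic group of order ℓ+1 with a fixed generator σ, and for 0 ≤ k ≤ ℓ let D^k := Σ_{i=k}^{ℓ} C(i,k)·σ^i ∈ ℤ[G]. Then for every integer k with 0 < k < p (note that k ≤ ℓ automatically, since ℓ+1 ≥ p^m ≥ p) one has (σ − 1)·D^k ≡ −σ·D^{k−1} (mod p^m), i.e. (σ − 1)·D^k + σ·D^{k−1} ∈ p^m·ℤ[G]. -/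
/-- The Darmon–Kolyvagin derivative `D^k := Σ_{i=k}^{ℓ} C(i,k)·σ^i ∈ ℤ[G]`. -/
noncomputable def DK {G : Type*} [Group G] (σ : G) (ℓ k : ℕ) : MonoidAlgebra ℤ G :=
  ∑ i ∈ Finset.Icc k ℓ, MonoidAlgebra.single (σ ^ i) (i.choose k : ℤ)

/-!
By Pascal's rule `σ·(D^k + D^{k-1}) = Σ_{i=k}^{ℓ+1} C(i,k)·σ^i = D^k + C(ℓ+1,k)·σ^{ℓ+1}`, so
`(σ − 1)·D^k + σ·D^{k−1} = C(ℓ+1,k)` once `σ^{ℓ+1} = 1`. Finally `k·C(ℓ+1,k) = (ℓ+1)·C(ℓ,k-1)`,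
and `k` is prime to `p`, so `p^m`, which divides `ℓ + 1`, divides `C(ℓ+1,k)`.
-/

open Finset MonoidAlgebra

theorem Nat.Coprime.dvd_choose_succ_succ {d n k : ℕ} (hk : d.Coprime (k + 1)) (hn : d ∣ n + 1) :
    d ∣ (n + 1).choose (k + 1) :=
  hk.dvd_of_dvd_mul_right (Nat.add_one_mul_choose_eq n k ▸ hn.mul_right _)

section DK

variable {G : Type*} [Group G] (σ : G) (ℓ : ℕ)

theorem DK_eq_sum_range (k : ℕ) :
    DK σ ℓ k = ∑ i ∈ range (ℓ + 1), single (σ ^ i) (i.choose k : ℤ) := by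
  refine sum_subset (fun i hi => ?_) (fun i _ hi => ?_)
  · simp only [mem_Icc, mem_range] at hi ⊢
    omega
  · rw [Nat.choose_eq_zero_of_lt (by simp_all), Nat.cast_zero, single_zero]

theorem single_mul_DK_add_DK (k : ℕ) :
    single σ (1 : ℤ) * (DK σ ℓ (k + 1) + DK σ ℓ k)
      = DK σ ℓ (k + 1) + single (σ ^ (ℓ + 1)) ((ℓ + 1).choose (k + 1) : ℤ) := by
  simp only [DK_eq_sum_range, ← sum_add_distrib, mul_sum, single_mul_single, ← single_add,
    one_mul, ← pow_succ', ← Nat.cast_add, add_comm (Nat.choose _ (k + 1)), ← Nat.choose_succ_succ']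
  rw [← sum_range_succ (fun i => single (σ ^ i) (i.choose (k + 1) : ℤ)), sum_range_succ' _ (ℓ + 1)]
  simp

theorem sub_one_mul_DK_add_mul_DK {k : ℕ} (hσ : σ ^ (ℓ + 1) = 1) :
    (single σ (1 : ℤ) - 1) * DK σ ℓ (k + 1) + single σ (1 : ℤ) * DK σ ℓ k
      = single 1 ((ℓ + 1).choose (k + 1) : ℤ) := by
  calc _ = single σ (1 : ℤ) * (DK σ ℓ (k + 1) + DK σ ℓ k) - DK σ ℓ (k + 1) := by noncomm_ring
    _ = _ := by rw [single_mul_DK_add_DK, hσ, add_sub_cancel_left]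

end DK

theorem stmt5_general {G : Type*} [Group G] [Fintype G] (p ℓ m : ℕ)
    (hp : p.Prime) (hdvd : p ^ m ∣ ℓ + 1)
    (σ : G) (hcard : Fintype.card G = ℓ + 1)
    (k : ℕ) (hk0 : 0 < k) (hkp : k < p) :
    ∃ c : MonoidAlgebra ℤ G,
      (MonoidAlgebra.single σ (1 : ℤ) - 1) * DK σ ℓ k
          + MonoidAlgebra.single σ (1 : ℤ) * DK σ ℓ (k - 1)
        = ((p : ℤ) ^ m) • c := by
  obtain ⟨j, rfl⟩ : ∃ j, k = j + 1 := Nat.exists_eq_add_of_le' hk0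
  have hcop : (p ^ m).Coprime (j + 1) :=
    (Nat.coprime_of_lt_prime hk0.ne' hkp hp).pow_left m
  obtain ⟨c, hc⟩ := hcop.dvd_choose_succ_succ hdvd
  refine ⟨single 1 (c : ℤ), ?_⟩
  rw [Nat.add_sub_cancel, sub_one_mul_DK_add_mul_DK σ ℓ (hcard ▸ pow_card_eq_one), hc,
    smul_single', Nat.cast_mul, Nat.cast_pow]

/-- Let `p, ℓ` be primes, `m ≥ 1` with `p^m ∣ ℓ+1`, and let `G` be cyclic
of order `ℓ+1` with generator `σ`. For `0 < k < p` one has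
`(σ − 1)·D^k ≡ −σ·D^{k−1} (mod p^m)`, i.e. `(σ − 1)·D^k + σ·D^{k−1} ∈ p^m·ℤ[G]`. -/
theorem stmt5 {G : Type*} [Group G] [Fintype G] (p ℓ m : ℕ)
    (hp : p.Prime) (hℓ : ℓ.Prime) (hm : 1 ≤ m) (hdvd : p ^ m ∣ ℓ + 1)
    (σ : G) (hcard : Fintype.card G = ℓ + 1)
    (hgen : ∀ g : G, g ∈ Subgroup.zpowers σ)
    (k : ℕ) (hk0 : 0 < k) (hkp : k < p) :
    ∃ c : MonoidAlgebra ℤ G,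
      (MonoidAlgebra.single σ (1 : ℤ) - 1) * DK σ ℓ k
          + MonoidAlgebra.single σ (1 : ℤ) * DK σ ℓ (k - 1)
        = ((p : ℤ) ^ m) • c :=
  stmt5_general p ℓ m hp hdvd σ hcard k hk0 hkp
end

section
/- Let R be a commutative ring, let G = G_1 × ⋯ × G_t where each G_i is a cyclic group of order n_i with fixed generator σ_i, let M be a module over the group ring R[G], and let m ∈ M. Then in M ⊗_R R[G] one has the Taylor expansion Σ_{σ ∈ G} (σ·m) ⊗ σ = Σ_κ (D_κ·m) ⊗ (σ_1 − 1)^{k_1} ⋯ (σ_t − 1)^{k_t}, where the sum on the right runs over all multi-indices κ = (k_1, …, k_t) with 0 ≤ k_i ≤ n_i − 1, and D_κ := D_1^{k_1} ⋯ D_t^{k_t} ∈ R[G] with D_i^{k} := Σ_{j=k}^{n_i−1} C(j,k)·σ_i^j. -/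
/-!
Both sides are images of the identity `Σ_g g ⊗ g = Σ_κ D_κ ⊗ ∏ᵢ (σᵢ - 1)^{kᵢ}` in `R[G] ⊗_R R[G]`
under `a ⊗ b ↦ (a • m) ⊗ b`. Writing `g = ∏ᵢ σᵢ^{jᵢ}` with `0 ≤ jᵢ < nᵢ`, the element `g ⊗ g` is
the product of the `σᵢ^{jᵢ} ⊗ σᵢ^{jᵢ}`, so the identity factors into one identity per coordinate.
In one variable it is the binomial expansion `σ^j = Σ_k C(j,k) (σ - 1)^k`, placed in the second
tensor factor, summed over `j < n` and regrouped by `k`.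
-/

open TensorProduct

/-- The Darmon–Kolyvagin derivative in the `i`-th variable,
`D_i^k := Σ_{j=k}^{n_i−1} C(j,k)·σ_i^j ∈ R[G₁ × ⋯ × G_t]`,
where `σ_i` is viewed in the product group via `Pi.mulSingle`. -/
noncomputable def DKpi (R : Type*) [CommRing R] {ι : Type*} [DecidableEq ι]
    {G : ι → Type*} [∀ i, CommGroup (G i)]
    (σ : ∀ i, G i) (n : ι → ℕ) (i : ι) (k : ℕ) : MonoidAlgebra R (∀ j, G j) :=
  ∑ j ∈ Finset.Icc k (n i - 1),
    MonoidAlgebra.single (Pi.mulSingle i (σ i) ^ j) (j.choose k : R)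

open Finset

theorem Algebra.TensorProduct.prod_tmul_prod {R A B ι : Type*} [CommSemiring R] [CommSemiring A]
    [CommSemiring B] [Algebra R A] [Algebra R B] (s : Finset ι) (a : ι → A) (b : ι → B) :
    (∏ i ∈ s, a i) ⊗ₜ[R] (∏ i ∈ s, b i) = ∏ i ∈ s, a i ⊗ₜ[R] b i := by
  induction s using Finset.cons_induction with
  | empty => rfl
  | cons i s hi ih => rw [prod_cons, prod_cons, prod_cons, ← ih, tmul_mul_tmul]

section Taylor

variable (R : Type*) {A : Type*} [CommRing R] [Ring A] [Algebra R A]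

noncomputable def kolyvaginDerivative (x : A) (n k : ℕ) : A :=
  ∑ j ∈ Icc k (n - 1), (j.choose k : R) • x ^ j

variable {R}

theorem pow_eq_sum_range_choose_nsmul_sub_one_pow {n j : ℕ} (hj : j < n) (x : A) :
    x ^ j = ∑ k ∈ range n, j.choose k • (x - 1) ^ k :=
  calc x ^ j = (x - 1 + 1) ^ j := by rw [sub_add_cancel]
    _ = ∑ k ∈ range (j + 1), j.choose k • (x - 1) ^ k := by
      rw [(Commute.one_right (x - 1)).add_pow]
      simp [nsmul_eq_mul, Nat.cast_comm]
    _ = ∑ k ∈ range n, j.choose k • (x - 1) ^ k := by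
      refine sum_subset (fun k hk => by simp at hk ⊢; omega) fun k _ hk => ?_
      simp [Nat.choose_eq_zero_of_lt (by simpa using hk : j < k)]

theorem sum_pow_tmul_pow_eq_sum_kolyvaginDerivative_tmul (x : A) (n : ℕ) :
    ∑ j ∈ range n, (x ^ j) ⊗ₜ[R] (x ^ j)
      = ∑ k ∈ range n, kolyvaginDerivative R x n k ⊗ₜ[R] ((x - 1) ^ k) :=
  calc ∑ j ∈ range n, (x ^ j) ⊗ₜ[R] (x ^ j)
      = ∑ j ∈ range n, ∑ k ∈ range n, ((j.choose k : R) • x ^ j) ⊗ₜ[R] ((x - 1) ^ k) := by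
        refine sum_congr rfl fun j hj => ?_
        nth_rewrite 2 [pow_eq_sum_range_choose_nsmul_sub_one_pow (mem_range.1 hj) x]
        simp only [tmul_sum, ← Nat.cast_smul_eq_nsmul R, tmul_smul, smul_tmul']
    _ = ∑ k ∈ range n, (∑ j ∈ range n, (j.choose k : R) • x ^ j) ⊗ₜ[R] ((x - 1) ^ k) := by
        rw [sum_comm]; simp only [sum_tmul]
    _ = _ := by
        refine sum_congr rfl fun k hk =>
          congrArg (· ⊗ₜ[R] _) (sum_subset ?_ fun j hjn hj => ?_).symm
        · intro j hj
          simp only [mem_Icc, mem_range] at hj hk ⊢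
          omega
        · simp only [mem_Icc, mem_range] at hj hjn
          simp [Nat.choose_eq_zero_of_lt (by omega : j < k)]

end Taylor

theorem sum_prod_pow_tmul_prod_pow_eq_sum_prod_kolyvaginDerivative_tmul {R A ι : Type*}
    [CommRing R] [CommRing A] [Algebra R A] [Fintype ι] [DecidableEq ι] (x : ι → A) (n : ι → ℕ) :
    ∑ κ : ∀ i, Fin (n i), (∏ i, x i ^ (κ i : ℕ)) ⊗ₜ[R] (∏ i, x i ^ (κ i : ℕ))
      = ∑ κ : ∀ i, Fin (n i),
          (∏ i, kolyvaginDerivative R (x i) (n i) (κ i)) ⊗ₜ[R] ∏ i, (x i - 1) ^ (κ i : ℕ) := by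
  simp only [Algebra.TensorProduct.prod_tmul_prod]
  rw [← Fintype.prod_sum fun i (k : Fin (n i)) => (x i ^ (k : ℕ)) ⊗ₜ[R] (x i ^ (k : ℕ)),
    ← Fintype.prod_sum fun i (k : Fin (n i)) =>
      kolyvaginDerivative R (x i) (n i) k ⊗ₜ[R] ((x i - 1) ^ (k : ℕ))]
  refine prod_congr rfl fun i _ => ?_
  simpa only [Fin.sum_univ_eq_sum_range (fun k => (x i ^ k) ⊗ₜ[R] (x i ^ k)),
    Fin.sum_univ_eq_sum_range (fun k => kolyvaginDerivative R (x i) (n i) k ⊗ₜ[R] ((x i - 1) ^ k))]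
    using sum_pow_tmul_pow_eq_sum_kolyvaginDerivative_tmul (x i) (n i)

theorem bijective_pow_fin_of_forall_mem_zpowers {G : Type*} [Group G] [Fintype G] {σ : G} {n : ℕ}
    (hcard : Fintype.card G = n) (hgen : ∀ g : G, g ∈ Subgroup.zpowers σ) :
    Function.Bijective fun k : Fin n => σ ^ (k : ℕ) := by
  have horder : orderOf σ = n := by
    rw [orderOf_eq_card_of_forall_mem_zpowers hgen, Nat.card_eq_fintype_card, hcard]
  refine (Fintype.bijective_iff_injective_and_card _).2 ⟨fun k l hkl => ?_, by simp [hcard]⟩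
  exact Fin.ext <| pow_injOn_Iio_orderOf (by simp [horder]) (by simp [horder]) hkl

theorem MonoidAlgebra.of_pi_eq_prod_of_mulSingle (R : Type*) [CommSemiring R] {ι : Type*}
    [Fintype ι] [DecidableEq ι] {G : ι → Type*} [∀ i, CommMonoid (G i)] (g : ∀ i, G i) :
    MonoidAlgebra.of R (∀ i, G i) g
      = ∏ i, MonoidAlgebra.of R (∀ i, G i) (Pi.mulSingle i (g i)) := by
  rw [← map_prod, univ_prod_mulSingle]

section GroupRing

variable (R : Type*) [CommRing R] {ι : Type*} [DecidableEq ι]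
  {G : ι → Type*} [∀ i, CommGroup (G i)]

theorem DKpi_eq_kolyvaginDerivative (σ : ∀ i, G i) (n : ι → ℕ) (i : ι) (k : ℕ) :
    DKpi R σ n i k
      = kolyvaginDerivative R (MonoidAlgebra.of R (∀ i, G i) (Pi.mulSingle i (σ i))) (n i) k := by
  refine sum_congr rfl fun j _ => ?_
  rw [← map_pow, MonoidAlgebra.of_apply, MonoidAlgebra.smul_single', mul_one]

theorem sum_single_tmul_single_eq_sum_prod_DKpi_tmul [Fintype ι] [∀ i, Fintype (G i)] (n : ι → ℕ)
    (σ : ∀ i, G i) (hcard : ∀ i, Fintype.card (G i) = n i)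
    (hgen : ∀ i, ∀ g : G i, g ∈ Subgroup.zpowers (σ i)) :
    ∑ g : ∀ i, G i,
        MonoidAlgebra.single g (1 : R) ⊗ₜ[R] MonoidAlgebra.single g (1 : R)
      = ∑ κ : ∀ i, Fin (n i),
          (∏ i, DKpi R σ n i (κ i : ℕ)) ⊗ₜ[R]
            ∏ i, (MonoidAlgebra.single (Pi.mulSingle i (σ i)) (1 : R) - 1) ^ (κ i : ℕ) := by
  have hbij := Function.Bijective.piMap fun i =>
    bijective_pow_fin_of_forall_mem_zpowers (hcard i) (hgen i)
  have hsingle (κ : ∀ i, Fin (n i)) :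
      MonoidAlgebra.single (Pi.map (fun i (k : Fin (n i)) => σ i ^ (k : ℕ)) κ) (1 : R)
        = ∏ i, MonoidAlgebra.of R (∀ i, G i) (Pi.mulSingle i (σ i)) ^ (κ i : ℕ) := by
    rw [← MonoidAlgebra.of_apply, MonoidAlgebra.of_pi_eq_prod_of_mulSingle R]
    refine prod_congr rfl fun i _ => ?_
    rw [Pi.map_apply, ← map_pow, Pi.mulSingle_pow]
  rw [← hbij.sum_comp]
  simp only [hsingle, DKpi_eq_kolyvaginDerivative]
  exact sum_prod_pow_tmul_prod_pow_eq_sum_prod_kolyvaginDerivative_tmul _ n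

end GroupRing

/-- **Taylor's formula.** For `G = G₁ × ⋯ × G_t` with `G_i` cyclic of order
`n_i` generated by `σ_i`, and `M` an `R[G]`-module, one has in `M ⊗_R R[G]`:
`Σ_{σ∈G} (σ·m) ⊗ σ = Σ_κ (D_κ·m) ⊗ (σ₁−1)^{k₁} ⋯ (σ_t−1)^{k_t}`,
the right-hand sum running over multi-indices `κ` with `0 ≤ k_i ≤ n_i − 1`. -/
theorem stmt7 (R : Type*) [CommRing R] {ι : Type*} [Fintype ι] [DecidableEq ι]
    (G : ι → Type*) [∀ i, CommGroup (G i)] [∀ i, Fintype (G i)]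
    (n : ι → ℕ) (σ : ∀ i, G i)
    (hcard : ∀ i, Fintype.card (G i) = n i)
    (hgen : ∀ i, ∀ g : G i, g ∈ Subgroup.zpowers (σ i))
    (M : Type*) [AddCommGroup M] [Module R M]
    [Module (MonoidAlgebra R (∀ i, G i)) M]
    [IsScalarTower R (MonoidAlgebra R (∀ i, G i)) M]
    (m : M) :
    ∑ g : ∀ i, G i,
        (MonoidAlgebra.single g (1 : R) • m) ⊗ₜ[R] MonoidAlgebra.single g (1 : R)
      = ∑ κ : ∀ i, Fin (n i),
          ((∏ i, DKpi R σ n i (κ i : ℕ)) • m) ⊗ₜ[R]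
            ∏ i, (MonoidAlgebra.single (Pi.mulSingle i (σ i)) (1 : R) - 1) ^ (κ i : ℕ) := by
  have := congrArg
    (TensorProduct.map ((LinearMap.toSpanSingleton _ M m).restrictScalars R) LinearMap.id)
    (sum_single_tmul_single_eq_sum_prod_DKpi_tmul R n σ hcard hgen)
  simpa only [map_sum, map_tmul, LinearMap.restrictScalars_apply, LinearMap.toSpanSingleton_apply,
    LinearMap.id_apply] using this
end

section
/- Let G be a group, let R be a commutative ring, and let M be an R-module equipped with an action of G by R-linear automorphisms such that the only G-stable R-submodules of M are 0 and M. Let N be a normal subgroup of G such that the quotient group G/N is solvable, and suppose that the image of G in the group of R-linear automorphisms of M is not a solvable group. Then the submodule of N-invariants M^N := {x ∈ M : n·x = x for all n ∈ N} is zero. -/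
/-!
The `N`-invariants form a `G`-stable submodule because `N` is normal, so by irreducibility
they are `0` or everything. In the second case `N` acts trivially, `ρ` factors through the
solvable group `G ⧸ N`, and its image would be solvable.
-/

def fixedSubmodule {G R M : Type*} [Group G] [CommRing R] [AddCommGroup M] [Module R M]
    (ρ : G →* (M ≃ₗ[R] M)) (N : Subgroup G) : Submodule R M where
  carrier := {x | ∀ n ∈ N, ρ n x = x}
  zero_mem' _ _ := map_zero _
  add_mem' ha hb n hn := by rw [map_add, ha n hn, hb n hn]
  smul_mem' c _ ha n hn := by rw [map_smul, ha n hn]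

section

variable {G R M : Type*} [Group G] [CommRing R] [AddCommGroup M] [Module R M]
  (ρ : G →* (M ≃ₗ[R] M)) (N : Subgroup G)

theorem apply_mem_fixedSubmodule [N.Normal] (g : G) {x : M} (hx : x ∈ fixedSubmodule ρ N) :
    ρ g x ∈ fixedSubmodule ρ N := by
  intro n hn
  have hconj : n * g = g * (g⁻¹ * n * g) := by group
  have hfix := hx _ (Subgroup.Normal.conj_mem' ‹_› n hn g)
  calc ρ n (ρ g x) = ρ (n * g) x := by rw [map_mul, LinearEquiv.mul_apply]
    _ = ρ g (ρ (g⁻¹ * n * g) x) := by rw [hconj, map_mul, LinearEquiv.mul_apply]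
    _ = ρ g x := by rw [hfix]

theorem le_ker_of_fixedSubmodule_eq_top (h : fixedSubmodule ρ N = ⊤) : N ≤ ρ.ker := fun n hn =>
  ρ.mem_ker.mpr <| LinearEquiv.ext fun x => (h ▸ Submodule.mem_top : x ∈ fixedSubmodule ρ N) n hn

end

theorem MonoidHom.isSolvable_range_of_le_ker {G H : Type*} [Group G] [Group H] (f : G →* H)
    {N : Subgroup G} [N.Normal] [Group.IsSolvable (G ⧸ N)] (hN : N ≤ f.ker) :
    Group.IsSolvable f.range := by
  have hrange : (QuotientGroup.lift N f hN).range = f.range := by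
    rw [← congrArg MonoidHom.range (QuotientGroup.lift_comp_mk' N f hN), MonoidHom.range_comp,
      MonoidHom.range_eq_top.mpr (QuotientGroup.mk'_surjective N), ← MonoidHom.range_eq_map]
  rw [← hrange]
  exact Group.isSolvable_of_surjective (QuotientGroup.lift N f hN).rangeRestrict_surjective

/-- Let `G` act on an `R`-module `M` by `R`-linear automorphisms, such
that the only `G`-stable submodules are `0` and `M`. If `N ⊴ G` with `G/N` solvable and
the image of `G` in the `R`-linear automorphisms of `M` is not solvable, then `M^N = 0`. -/
theorem stmt10 {G : Type*} [Group G] {R : Type*} [CommRing R]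
    {M : Type*} [AddCommGroup M] [Module R M]
    (ρ : G →* (M ≃ₗ[R] M))
    (hirr : ∀ W : Submodule R M, (∀ g : G, ∀ x ∈ W, ρ g x ∈ W) → W = ⊥ ∨ W = ⊤)
    (N : Subgroup G) [hN : N.Normal]
    (hsolv : IsSolvable (G ⧸ N))
    (himg : ¬ IsSolvable ρ.range) :
    ∀ x : M, (∀ n ∈ N, ρ n x = x) → x = 0 := by
  intro x hx
  have : Group.IsSolvable (G ⧸ N) := hsolv  -- the deprecated alias `IsSolvable` is no class
  rcases hirr (fixedSubmodule ρ N) (apply_mem_fixedSubmodule ρ N) with hbot | htop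
  · exact (Submodule.eq_bot_iff _).mp hbot x hx
  · exact absurd (ρ.isSolvable_range_of_le_ker (le_ker_of_fixedSubmodule_eq_top ρ N htop)) himg
end
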